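/- Let A be an m×n real matrix, K ⊆ {1,…,n}, C > 1, and x ∈ ℝⁿ. Suppose that (i) for every w ∈ ℝⁿ with Aw = 0 one has ‖x_K + w_K‖₁ + (1/C)·‖w_K̄‖₁ ≥ ‖x_K‖₁, and (ii) κ ≥ 0 is a constant such that ‖w_K‖₁ ≤ κ·‖w_K̄‖₁ for every w ∈ ℝⁿ with Aw = 0. Then every ℓ1 minimizer x̂ for (A, x) satisfies ‖x − x̂‖₁ ≤ (2C(1+κ)/(C−1))·‖x_K̄‖₁. -/

import Mathlib

/-- The ℓ1 norm of a vector in ℝⁿ. -/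
noncomputable def l1 {n : ℕ} (x : Fin n → ℝ) : ℝ := ∑ i, |x i|

/-- The restriction of a vector to the coordinates in `K` (zero outside `K`). -/
def restr {n : ℕ} (K : Finset (Fin n)) (x : Fin n → ℝ) : Fin n → ℝ :=
  fun i => if i ∈ K then x i else 0

/-!
Write `x̂ = x + w` with `w` in the null space. Splitting `‖x + w‖₁ ≤ ‖x‖₁` over `K` and `K̄` and
applying the reverse triangle inequality on `K̄` gives
`‖x_K + w_K‖₁ + ‖w_K̄‖₁ - ‖x_K̄‖₁ ≤ ‖x_K‖₁ + ‖x_K̄‖₁`; combined with (i) this bounds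
`(1 - 1/C)‖w_K̄‖₁` by `2‖x_K̄‖₁`, and (ii) then controls `‖w‖₁ = ‖w_K‖₁ + ‖w_K̄‖₁ ≤ (1 + κ)‖w_K̄‖₁`.
-/

section L1

variable {n : ℕ}

lemma l1_neg (x : Fin n → ℝ) : l1 (-x) = l1 x := by
  simp [l1]

lemma sub_l1_le_l1_add (x y : Fin n → ℝ) : l1 y - l1 x ≤ l1 (x + y) := by
  rw [l1, l1, l1, ← Finset.sum_sub_distrib]
  refine Finset.sum_le_sum fun i _ => ?_
  simpa [add_comm] using abs_sub_abs_le_abs_sub (y i) (-x i)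

lemma restr_add (K : Finset (Fin n)) (x y : Fin n → ℝ) :
    restr K (x + y) = restr K x + restr K y := by
  funext i
  by_cases hi : i ∈ K <;> simp [restr, hi]

lemma l1_restr (K : Finset (Fin n)) (x : Fin n → ℝ) : l1 (restr K x) = ∑ i ∈ K, |x i| := by
  rw [l1, ← Finset.sum_subset (Finset.subset_univ K)]
  · exact Finset.sum_congr rfl fun i hi => by simp [restr, hi]
  · intro i _ hi
    simp [restr, hi]

lemma l1_restr_add_l1_restr_compl (K : Finset (Fin n)) (x : Fin n → ℝ) :
    l1 (restr K x) + l1 (restr Kᶜ x) = l1 x := by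
  rw [l1_restr, l1_restr, l1, Finset.sum_add_sum_compl]

lemma l1_le_of_l1_restr_le (K : Finset (Fin n)) {κ : ℝ} {w : Fin n → ℝ}
    (hw : l1 (restr K w) ≤ κ * l1 (restr Kᶜ w)) : l1 w ≤ (1 + κ) * l1 (restr Kᶜ w) := by
  linarith [l1_restr_add_l1_restr_compl K w]

lemma l1_restr_compl_le_of_l1_add_le (K : Finset (Fin n)) {C : ℝ} (hC : 1 < C)
    {x w : Fin n → ℝ}
    (hK : l1 (restr K x) ≤ l1 (restr K x + restr K w) + (1 / C) * l1 (restr Kᶜ w))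
    (hle : l1 (x + w) ≤ l1 x) :
    l1 (restr Kᶜ w) ≤ 2 * C / (C - 1) * l1 (restr Kᶜ x) := by
  have hsplit_x := l1_restr_add_l1_restr_compl K x
  have hsplit_xw := l1_restr_add_l1_restr_compl K (x + w)
  rw [restr_add, restr_add] at hsplit_xw
  have hrev := sub_l1_le_l1_add (restr Kᶜ x) (restr Kᶜ w)
  have hkey : (1 - 1 / C) * l1 (restr Kᶜ w) ≤ 2 * l1 (restr Kᶜ x) := by linarith
  have hC1 : 0 < C - 1 := by linarith
  rw [div_mul_eq_mul_div, le_div_iff₀ hC1]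
  calc l1 (restr Kᶜ w) * (C - 1) = (1 - 1 / C) * l1 (restr Kᶜ w) * C := by field_simp
    _ ≤ 2 * l1 (restr Kᶜ x) * C := by gcongr
    _ = 2 * C * l1 (restr Kᶜ x) := by ring

end L1

theorem stmt_8 {m n : ℕ} (A : Matrix (Fin m) (Fin n) ℝ)
    (K : Finset (Fin n)) (C : ℝ) (hC : 1 < C) (x : Fin n → ℝ)
    (hcond : ∀ w : Fin n → ℝ, A.mulVec w = 0 →
      l1 (restr K x + restr K w) + (1 / C) * l1 (restr Kᶜ w) ≥ l1 (restr K x))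
    (κ : ℝ) (hκ : 0 ≤ κ)
    (hκ2 : ∀ w : Fin n → ℝ, A.mulVec w = 0 →
      l1 (restr K w) ≤ κ * l1 (restr Kᶜ w)) :
    ∀ xh : Fin n → ℝ, A.mulVec xh = A.mulVec x →
      (∀ z : Fin n → ℝ, A.mulVec z = A.mulVec x → l1 xh ≤ l1 z) →
      l1 (x - xh) ≤ (2 * C * (1 + κ) / (C - 1)) * l1 (restr Kᶜ x) := by
  intro xh hA hmin
  set w := xh - x
  have hAw : A.mulVec w = 0 := by rw [Matrix.mulVec_sub, hA, sub_self]
  have hle : l1 (x + w) ≤ l1 x := by simpa [w] using hmin x rfl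
  have hw := l1_restr_compl_le_of_l1_add_le K hC (hcond w hAw) hle
  have hxw : x - xh = -w := by simp [w]
  calc l1 (x - xh) = l1 w := by rw [hxw, l1_neg]
    _ ≤ (1 + κ) * l1 (restr Kᶜ w) := l1_le_of_l1_restr_le K (hκ2 w hAw)
    _ ≤ (1 + κ) * (2 * C / (C - 1) * l1 (restr Kᶜ x)) := by gcongr
    _ = (2 * C * (1 + κ) / (C - 1)) * l1 (restr Kᶜ x) := by ring
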